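/- For block quantization Q_h^B with blocks of sizes d_1, …, d_B and steps h_1, …, h_B > 0, applied independently block-wise, and any symmetric positive semidefinite matrix 𝐋 with diagonal block matrices 𝐋^{ll} ∈ ℝ^{d_l×d_l}: E[‖Q_h^B(x) − x‖²_𝐋] ≤ max_{1≤l≤B} min(h_l² ‖diag(𝐋^{ll})‖₁, h_l ‖diag(𝐋^{ll})‖) · ‖x‖² for all x. In particular ℒ(Q_h^B, 𝐋) ≤ max_l h_l ‖diag(𝐋^{ll})‖. -/

import Mathlib

open Matrix MeasureTheory ProbabilityTheory BigOperators

/-!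
The error of block quantization is `Q - x = (c_t (ξ_t - v_t))_t` with `c_t = ‖x^l‖ sign x_t`.
Stochastic rounding is unbiased, so by independence the cross terms of `E[(Q - x)ᵀ L (Q - x)]`
vanish and only `∑_t L_tt c_t² Var ξ_t` survives. Rounding `v` to a grid of step `h` has variance
`h² θ (1 - θ)`, `θ` the fractional part of `v / h`, which is at most `h²` and at most `h v`.
Together with `c_t² ≤ ‖x^l‖²` and Cauchy–Schwarz against `(v_j)_j`, of norm at most one, this
bounds block `l` by `min (h_l² ‖diag L^{ll}‖₁, h_l ‖diag L^{ll}‖) ‖x^l‖²`; sum over the blocks.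
-/

namespace Real

lemma sign_mul_abs (r : ℝ) : sign r * |r| = r := by
  rcases lt_trichotomy r 0 with hr | rfl | hr
  · rw [sign_of_neg hr, abs_of_neg hr]; ring
  · simp
  · rw [sign_of_pos hr, abs_of_pos hr]; ring

lemma mul_sign_sq_le (a r : ℝ) : (a * sign r) ^ 2 ≤ a ^ 2 := by
  rcases sign_apply_eq r with h | h | h <;> rw [h] <;> nlinarith [sq_nonneg a]

end Real

section Normalization

variable {κ : Type*} [Fintype κ] (y : κ → ℝ)

lemma abs_le_sqrt_sum_sq (j : κ) : |y j| ≤ √(∑ i, y i ^ 2) :=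
  Real.abs_le_sqrt (Finset.single_le_sum (fun i _ => sq_nonneg (y i)) (Finset.mem_univ j))

lemma sum_sq_abs_div_sqrt_sum_sq_le_one : ∑ j, (|y j| / √(∑ i, y i ^ 2)) ^ 2 ≤ 1 := by
  simp_rw [div_pow, sq_abs, ← Finset.sum_div,
    Real.sq_sqrt (Finset.sum_nonneg fun i _ => sq_nonneg (y i))]
  exact div_self_le_one _

lemma sqrt_sum_sq_mul_sign_mul_abs_div (j : κ) :
    √(∑ i, y i ^ 2) * Real.sign (y j) * (|y j| / √(∑ i, y i ^ 2)) = y j := by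
  rcases (Real.sqrt_nonneg (∑ i, y i ^ 2)).eq_or_lt with h0 | hpos
  · have : y j = 0 := abs_nonpos_iff.1 (h0 ▸ abs_le_sqrt_sum_sq y j)
    simp [this]
  · rw [mul_right_comm, mul_div_cancel₀ _ hpos.ne', mul_comm, Real.sign_mul_abs]

end Normalization

section TwoPoint

variable {Ω : Type*} [MeasurableSpace Ω] {μ : Measure Ω} {f : Ω → ℝ} {a b : ℝ}

lemma ae_eq_or_eq_of_measure_eq_ofReal [IsProbabilityMeasure μ] (hf : Measurable f) (hab : a ≠ b)
    {p q : ℝ} (ha : μ {ω | f ω = a} = ENNReal.ofReal p) (hb : μ {ω | f ω = b} = ENNReal.ofReal q)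
    (hp : 0 ≤ p) (hq : 0 ≤ q) (hpq : p + q = 1) :
    ∀ᵐ ω ∂μ, f ω = a ∨ f ω = b := by
  have hA : MeasurableSet {ω | f ω = a} := hf (measurableSet_singleton a)
  have hB : MeasurableSet {ω | f ω = b} := hf (measurableSet_singleton b)
  have hdisj : Disjoint {ω | f ω = a} {ω | f ω = b} :=
    Set.disjoint_left.2 fun ω ha hb => hab (ha.symm.trans hb)
  have hunion : μ ({ω | f ω = a} ∪ {ω | f ω = b}) = 1 := by
    rw [measure_union hdisj hB, ha, hb, ← ENNReal.ofReal_add hp hq, hpq, ENNReal.ofReal_one]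
  exact ae_iff.2 ((prob_compl_eq_zero_iff (hA.union hB)).2 hunion)

lemma comp_ae_eq_indicator_add_indicator (hab : a ≠ b) (hae : ∀ᵐ ω ∂μ, f ω = a ∨ f ω = b)
    (φ : ℝ → ℝ) :
    (fun ω => φ (f ω)) =ᵐ[μ] fun ω =>
      {ω | f ω = a}.indicator (fun _ => φ a) ω + {ω | f ω = b}.indicator (fun _ => φ b) ω := by
  filter_upwards [hae] with ω hω
  rcases hω with hω | hω <;> simp [Set.indicator, hω, hab, hab.symm]

lemma integrable_comp_of_ae_eq_or_eq [IsFiniteMeasure μ] (hf : Measurable f) (hab : a ≠ b)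
    (hae : ∀ᵐ ω ∂μ, f ω = a ∨ f ω = b) (φ : ℝ → ℝ) : Integrable (fun ω => φ (f ω)) μ :=
  (((integrable_const _).indicator (hf (measurableSet_singleton a))).add
    ((integrable_const _).indicator (hf (measurableSet_singleton b)))).congr
    (comp_ae_eq_indicator_add_indicator hab hae φ).symm

lemma integral_comp_of_ae_eq_or_eq [IsFiniteMeasure μ] (hf : Measurable f) (hab : a ≠ b)
    (hae : ∀ᵐ ω ∂μ, f ω = a ∨ f ω = b) (φ : ℝ → ℝ) :
    ∫ ω, φ (f ω) ∂μ = φ a * μ.real {ω | f ω = a} + φ b * μ.real {ω | f ω = b} := by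
  have ha : MeasurableSet {ω | f ω = a} := hf (measurableSet_singleton a)
  have hb : MeasurableSet {ω | f ω = b} := hf (measurableSet_singleton b)
  rw [integral_congr_ae (comp_ae_eq_indicator_add_indicator hab hae φ),
    integral_add ((integrable_const _).indicator ha) ((integrable_const _).indicator hb),
    integral_indicator_const _ ha, integral_indicator_const _ hb, smul_eq_mul, smul_eq_mul,
    mul_comm, mul_comm (μ.real _)]

end TwoPoint

theorem integral_dotProduct_mulVec_of_iIndepFun {Ω ι : Type*} [MeasurableSpace Ω] {μ : Measure Ω}
    [Fintype ι] {ζ : ι → Ω → ℝ} (hind : iIndepFun ζ μ) (hL2 : ∀ t, MemLp (ζ t) 2 μ)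
    (hmean : ∀ t, ∫ ω, ζ t ω ∂μ = 0) (L : Matrix ι ι ℝ) :
    ∫ ω, (fun t => ζ t ω) ⬝ᵥ L *ᵥ (fun t => ζ t ω) ∂μ = ∑ t, L t t * ∫ ω, ζ t ω ^ 2 ∂μ := by
  have hint : ∀ s t, Integrable (fun ω => L s t * (ζ s ω * ζ t ω)) μ := fun s t =>
    ((hL2 s).integrable_mul (hL2 t)).const_mul _
  have hcross : ∀ s t, s ≠ t → ∫ ω, ζ s ω * ζ t ω ∂μ = 0 := fun s t hst => by
    rw [(hind.indepFun hst).integral_fun_mul_eq_mul_integral (hL2 s).1 (hL2 t).1, hmean s,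
      zero_mul]
  simp_rw [dotProduct, mulVec, dotProduct, Finset.mul_sum, ← mul_assoc, mul_comm (ζ _ _) (L _ _),
    mul_assoc]
  rw [integral_finsetSum _ fun s _ => integrable_finsetSum _ fun t _ => hint s t]
  refine Finset.sum_congr rfl fun s _ => ?_
  rw [integral_finsetSum _ fun t _ => hint s t,
    Finset.sum_eq_single s
      (fun t _ hts => by rw [integral_const_mul, hcross s t hts.symm, mul_zero])
      (fun hs => absurd (Finset.mem_univ s) hs), integral_const_mul]
  simp_rw [sq]

section StochasticRounding

variable {Ω : Type*} [MeasurableSpace Ω]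

structure IsStochasticRounding (μ : Measure Ω) (ξ : Ω → ℝ) (h v : ℝ) (k : ℕ) : Prop where
  measurable : Measurable ξ
  step_pos : 0 < h
  lower_le : (k : ℝ) ≤ v / h
  le_upper : v / h ≤ k + 1
  measure_lower : μ {ω | ξ ω = k * h} = ENNReal.ofReal (k + 1 - v / h)
  measure_upper : μ {ω | ξ ω = (k + 1) * h} = ENNReal.ofReal (v / h - k)

namespace IsStochasticRounding

variable {μ : Measure Ω} {ξ : Ω → ℝ} {h v : ℝ} {k : ℕ}

lemma of_eq_floor (hξ : Measurable ξ) (hh : 0 < h) (hv : 0 ≤ v) (hk : k = ⌊v / h⌋₊)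
    (hlower : μ {ω | ξ ω = k * h} = ENNReal.ofReal (k + 1 - v / h))
    (hupper : μ {ω | ξ ω = (k + 1) * h} = ENNReal.ofReal (v / h - k)) :
    IsStochasticRounding μ ξ h v k :=
  ⟨hξ, hh, hk ▸ Nat.floor_le (div_nonneg hv hh.le), hk ▸ (Nat.lt_floor_add_one _).le, hlower,
    hupper⟩

lemma lower_ne_upper (hξ : IsStochasticRounding μ ξ h v k) : (k : ℝ) * h ≠ (k + 1) * h :=
  (mul_lt_mul_of_pos_right (lt_add_one _) hξ.step_pos).ne

variable [IsProbabilityMeasure μ]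

lemma ae_eq_lower_or_eq_upper (hξ : IsStochasticRounding μ ξ h v k) :
    ∀ᵐ ω ∂μ, ξ ω = k * h ∨ ξ ω = (k + 1) * h :=
  ae_eq_or_eq_of_measure_eq_ofReal hξ.measurable hξ.lower_ne_upper hξ.measure_lower
    hξ.measure_upper (by linarith [hξ.le_upper]) (by linarith [hξ.lower_le]) (by ring)

lemma integrable_comp (hξ : IsStochasticRounding μ ξ h v k) (φ : ℝ → ℝ) :
    Integrable (fun ω => φ (ξ ω)) μ :=
  integrable_comp_of_ae_eq_or_eq hξ.measurable hξ.lower_ne_upper hξ.ae_eq_lower_or_eq_upper φ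

lemma integral_comp (hξ : IsStochasticRounding μ ξ h v k) (φ : ℝ → ℝ) :
    ∫ ω, φ (ξ ω) ∂μ = φ (k * h) * (k + 1 - v / h) + φ ((k + 1) * h) * (v / h - k) := by
  rw [integral_comp_of_ae_eq_or_eq hξ.measurable hξ.lower_ne_upper hξ.ae_eq_lower_or_eq_upper,
    measureReal_def, measureReal_def, hξ.measure_lower, hξ.measure_upper,
    ENNReal.toReal_ofReal (by linarith [hξ.le_upper]),
    ENNReal.toReal_ofReal (by linarith [hξ.lower_le])]

lemma memLp_sub (hξ : IsStochasticRounding μ ξ h v k) : MemLp (fun ω => ξ ω - v) 2 μ :=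
  (memLp_two_iff_integrable_sq (hξ.measurable.sub_const v).aestronglyMeasurable).2
    (hξ.integrable_comp fun y => (y - v) ^ 2)

lemma integral_sub (hξ : IsStochasticRounding μ ξ h v k) : ∫ ω, (ξ ω - v) ∂μ = 0 := by
  rw [hξ.integral_comp fun y => y - v]
  field_simp [hξ.step_pos.ne']
  ring

lemma integral_sub_sq (hξ : IsStochasticRounding μ ξ h v k) :
    ∫ ω, (ξ ω - v) ^ 2 ∂μ = h ^ 2 * ((v / h - k) * (k + 1 - v / h)) := by
  rw [hξ.integral_comp fun y => (y - v) ^ 2]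
  field_simp [hξ.step_pos.ne']
  ring

lemma integral_sub_sq_le_sq (hξ : IsStochasticRounding μ ξ h v k) :
    ∫ ω, (ξ ω - v) ^ 2 ∂μ ≤ h ^ 2 := by
  have h1 := hξ.lower_le
  have h2 := hξ.le_upper
  rw [hξ.integral_sub_sq]
  refine mul_le_of_le_one_right (sq_nonneg h) ?_
  nlinarith

lemma integral_sub_sq_le_mul (hξ : IsStochasticRounding μ ξ h v k) :
    ∫ ω, (ξ ω - v) ^ 2 ∂μ ≤ h * v := by
  have h1 := hξ.lower_le
  have h2 := hξ.le_upper
  have hk : (0 : ℝ) ≤ k := k.cast_nonneg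
  have hprod : (v / h - k) * (k + 1 - v / h) ≤ v / h := by nlinarith
  calc ∫ ω, (ξ ω - v) ^ 2 ∂μ ≤ h ^ 2 * (v / h) := by
        rw [hξ.integral_sub_sq]; exact mul_le_mul_of_nonneg_left hprod (sq_nonneg h)
    _ = h * v := by field_simp [hξ.step_pos.ne']

theorem integral_dotProduct_mulVec {ι : Type*} [Fintype ι] {ξ : ι → Ω → ℝ} {h v : ι → ℝ}
    {k : ι → ℕ} (hξ : ∀ t, IsStochasticRounding μ (ξ t) (h t) (v t) (k t)) (hind : iIndepFun ξ μ)
    (c : ι → ℝ) (L : Matrix ι ι ℝ) :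
    ∫ ω, (fun t => c t * (ξ t ω - v t)) ⬝ᵥ L *ᵥ (fun t => c t * (ξ t ω - v t)) ∂μ
      = ∑ t, L t t * (c t ^ 2 * ∫ ω, (ξ t ω - v t) ^ 2 ∂μ) := by
  have hζ : iIndepFun (fun t ω => c t * (ξ t ω - v t)) μ :=
    hind.comp (fun t y => c t * (y - v t)) fun t => by fun_prop
  rw [integral_dotProduct_mulVec_of_iIndepFun hζ
    (fun t => (hξ t).memLp_sub.const_mul (c t))
    (fun t => by rw [integral_const_mul, (hξ t).integral_sub, mul_zero])]
  simp_rw [mul_pow, integral_const_mul]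

end IsStochasticRounding

end StochasticRounding

lemma sum_mul_mul_le_sum_mul_mul {κ : Type*} [Fintype κ] {D w E : κ → ℝ} {r : ℝ}
    (hw : ∀ j, w j ≤ r) (hDE : ∀ j, 0 ≤ D j * E j) :
    ∑ j, D j * (w j * E j) ≤ (∑ j, D j * E j) * r := by
  rw [Finset.sum_mul]
  exact Finset.sum_le_sum fun j _ => by nlinarith [mul_le_mul_of_nonneg_left (hw j) (hDE j)]

lemma sum_mul_le_mul_sqrt_sum_sq {κ : Type*} [Fintype κ] {D E v : κ → ℝ} {h : ℝ}
    (hD : ∀ j, 0 ≤ D j) (hh : 0 ≤ h) (hE : ∀ j, E j ≤ h * v j) (hv : ∑ j, v j ^ 2 ≤ 1) :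
    ∑ j, D j * E j ≤ h * √(∑ j, D j ^ 2) :=
  calc ∑ j, D j * E j ≤ h * ∑ j, D j * v j := by
        rw [Finset.mul_sum]
        exact Finset.sum_le_sum fun j _ => by nlinarith [mul_le_mul_of_nonneg_left (hE j) (hD j)]
    _ ≤ h * (√(∑ j, D j ^ 2) * √(∑ j, v j ^ 2)) :=
        mul_le_mul_of_nonneg_left (Real.sum_mul_le_sqrt_mul_sqrt _ _ _) hh
    _ ≤ h * √(∑ j, D j ^ 2) :=
        mul_le_mul_of_nonneg_left (mul_le_of_le_one_right (Real.sqrt_nonneg _)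
          (Real.sqrt_le_one.2 hv)) hh

lemma sum_mul_le_min_of_le_sq_of_le_mul {κ : Type*} [Fintype κ] {D E v : κ → ℝ} {h : ℝ}
    (hD : ∀ j, 0 ≤ D j) (hh : 0 ≤ h) (hEsq : ∀ j, E j ≤ h ^ 2) (hEv : ∀ j, E j ≤ h * v j)
    (hv : ∑ j, v j ^ 2 ≤ 1) :
    ∑ j, D j * E j ≤ min (h ^ 2 * ∑ j, D j) (h * √(∑ j, D j ^ 2)) := by
  refine le_min ?_ (sum_mul_le_mul_sqrt_sum_sq hD hh hEv hv)
  rw [Finset.mul_sum]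
  exact Finset.sum_le_sum fun j _ => by nlinarith [mul_le_mul_of_nonneg_left (hEsq j) (hD j)]

lemma sum_sigma_le_iSup_mul_sum {ι : Type*} [Fintype ι] {α : ι → Type*} [∀ i, Fintype (α i)]
    (f : Sigma α → ℝ) {b n : ι → ℝ} (hn : ∀ i, 0 ≤ n i) (hf : ∀ i, ∑ j, f ⟨i, j⟩ ≤ b i * n i) :
    ∑ t, f t ≤ (⨆ i, b i) * ∑ i, n i := by
  rw [Fintype.sum_sigma, Finset.mul_sum]
  exact Finset.sum_le_sum fun i _ => (hf i).trans <| mul_le_mul_of_nonneg_right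
    (le_ciSup (Set.finite_range b).bddAbove i) (hn i)

/-- Variance bound for block quantization: with blocks `l : Fin B` of sizes `dd l`, steps
`h l > 0`, and the random block quantization
`[Q_h^B(x)]_t = ‖x^l‖ · sign(x_t) · ξ_t(|x_t|/‖x^l‖)` (unbiased stochastic rounding to the grid
`{0, h_l, 2h_l, …}`, independently per coordinate), for any symmetric positive semidefinite `L`:
`E‖Q_h^B(x) - x‖²_L ≤ max_l min(h_l² ‖diag(L^{ll})‖₁, h_l ‖diag(L^{ll})‖) ‖x‖²`; in particular
`ℒ(Q_h^B, L) ≤ max_l h_l ‖diag(L^{ll})‖`. -/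
theorem stmt9 {B : ℕ} {dd : Fin B → ℕ} {Ω : Type*} [MeasurableSpace Ω]
    (μ : Measure Ω) [IsProbabilityMeasure μ]
    (x : ((l : Fin B) × Fin (dd l)) → ℝ) (h : Fin B → ℝ) (hh : ∀ l, 0 < h l)
    (L : Matrix ((l : Fin B) × Fin (dd l)) ((l : Fin B) × Fin (dd l)) ℝ) (hL : L.PosSemidef)
    (nxl : Fin B → ℝ) (hnxl : ∀ l, nxl l = Real.sqrt (∑ j, (x ⟨l, j⟩) ^ 2))
    (v : ((l : Fin B) × Fin (dd l)) → ℝ) (hv : ∀ t, v t = |x t| / nxl t.1)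
    (k : ((l : Fin B) × Fin (dd l)) → ℕ) (hk : ∀ t, k t = ⌊v t / h t.1⌋₊)
    (ξ : ((l : Fin B) × Fin (dd l)) → Ω → ℝ) (hmeas : ∀ t, Measurable (ξ t))
    (hind : iIndepFun ξ μ)
    (hdown : ∀ t, μ {ω | ξ t ω = (k t : ℝ) * h t.1}
      = ENNReal.ofReal ((k t : ℝ) + 1 - v t / h t.1))
    (hup : ∀ t, μ {ω | ξ t ω = ((k t : ℝ) + 1) * h t.1}
      = ENNReal.ofReal (v t / h t.1 - (k t : ℝ)))
    (Q : Ω → ((l : Fin B) × Fin (dd l)) → ℝ)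
    (hQ : ∀ ω t, Q ω t = nxl t.1 * Real.sign (x t) * ξ t ω) :
    (∫ ω, (Q ω - x) ⬝ᵥ L.mulVec (Q ω - x) ∂μ)
      ≤ (⨆ l, min ((h l) ^ 2 * ∑ j, L ⟨l, j⟩ ⟨l, j⟩)
          (h l * Real.sqrt (∑ j, (L ⟨l, j⟩ ⟨l, j⟩) ^ 2))) * (x ⬝ᵥ x)
    ∧ (∫ ω, (Q ω - x) ⬝ᵥ L.mulVec (Q ω - x) ∂μ)
      ≤ (⨆ l, h l * Real.sqrt (∑ j, (L ⟨l, j⟩ ⟨l, j⟩) ^ 2)) * (x ⬝ᵥ x) := by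
  set c : ((l : Fin B) × Fin (dd l)) → ℝ := fun t => nxl t.1 * Real.sign (x t)
  set E : ((l : Fin B) × Fin (dd l)) → ℝ := fun t => ∫ ω, (ξ t ω - v t) ^ 2 ∂μ
  have hround : ∀ t, IsStochasticRounding μ (ξ t) (h t.1) (v t) (k t) := fun t =>
    .of_eq_floor (hmeas t) (hh _)
      (hv t ▸ div_nonneg (abs_nonneg _) (hnxl t.1 ▸ Real.sqrt_nonneg _)) (hk t) (hdown t) (hup t)
  have hx : ∀ t, x t = c t * v t := fun ⟨l, j⟩ => by
    show _ = nxl l * _ * _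
    rw [hv, hnxl]
    exact (sqrt_sum_sq_mul_sign_mul_abs_div (fun j => x ⟨l, j⟩) j).symm
  have herr : ∀ ω, Q ω - x = fun t => c t * (ξ t ω - v t) := fun ω => by
    ext t
    rw [Pi.sub_apply, hQ, mul_sub, ← hx t]
  have hxx : x ⬝ᵥ x = ∑ l, nxl l ^ 2 := by
    simp_rw [hnxl, Real.sq_sqrt (Finset.sum_nonneg fun _ _ => sq_nonneg _), dotProduct, ← sq,
      Fintype.sum_sigma]
  have hv_sq : ∀ l, ∑ j, v ⟨l, j⟩ ^ 2 ≤ 1 := fun l => by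
    simp_rw [hv, hnxl]
    exact sum_sq_abs_div_sqrt_sum_sq_le_one _
  have hblock : ∀ l, ∑ j, L ⟨l, j⟩ ⟨l, j⟩ * (c ⟨l, j⟩ ^ 2 * E ⟨l, j⟩)
      ≤ min (h l ^ 2 * ∑ j, L ⟨l, j⟩ ⟨l, j⟩) (h l * √(∑ j, L ⟨l, j⟩ ⟨l, j⟩ ^ 2)) * nxl l ^ 2 :=
    fun l => calc
      _ ≤ (∑ j, L ⟨l, j⟩ ⟨l, j⟩ * E ⟨l, j⟩) * nxl l ^ 2 :=
          sum_mul_mul_le_sum_mul_mul (fun j => Real.mul_sign_sq_le _ _)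
            (fun j => mul_nonneg hL.diag_nonneg (integral_nonneg fun ω => sq_nonneg _))
      _ ≤ _ := mul_le_mul_of_nonneg_right (sum_mul_le_min_of_le_sq_of_le_mul
          (fun j => hL.diag_nonneg) (hh l).le (fun j => (hround _).integral_sub_sq_le_sq)
          (fun j => (hround _).integral_sub_sq_le_mul) (hv_sq l)) (sq_nonneg _)
  simp_rw [herr, IsStochasticRounding.integral_dotProduct_mulVec hround hind c L, hxx]
  have hmin := sum_sigma_le_iSup_mul_sum (fun t => L t t * (c t ^ 2 * E t))
    (n := fun l => nxl l ^ 2) (fun l => sq_nonneg _) hblock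
  exact ⟨hmin, hmin.trans <| mul_le_mul_of_nonneg_right
    (ciSup_mono (Set.finite_range _).bddAbove fun l => min_le_right _ _)
    (Finset.sum_nonneg fun l _ => sq_nonneg _)⟩
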